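/- Let n ≥ 2 and let T be a computable tree over Fin n whose set of infinite paths [T] is nonempty. If no infinite path of T is a computable function (i.e., [T] is a special effectively closed set), then [T] has cardinality exactly 2^ℵ₀. -/

import Mathlib

/-- The initial segment (f 0, …, f (k-1)) of an infinite sequence f. -/
def initSeg {n : ℕ} (f : ℕ → Fin n) (k : ℕ) : List (Fin n) :=
  List.ofFn (fun i : Fin k => f i)

/-- A tree over `Fin n`: a set of finite strings closed under taking prefixes. -/
def IsTree {n : ℕ} (T : Set (List (Fin n))) : Prop :=
  ∀ σ ∈ T, ∀ τ, τ <+: σ → τ ∈ T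

/-- `f` is an infinite path of `T`: every initial segment of `f` belongs to `T`. -/
def IsPath {n : ℕ} (T : Set (List (Fin n))) (f : ℕ → Fin n) : Prop :=
  ∀ k : ℕ, initSeg f k ∈ T

/-!
If `f` is the only path of a computable tree `T` through the node `initSeg f k`, then `f` is
computable: by König's lemma every `m` admits a level `L` of `T` on which all nodes comparable
with `initSeg f k` extend `initSeg f (m + 1)`, and a search for such a level yields `f m`.
So when `[T]` has no computable member it has no isolated point, i.e. it is a nonempty perfect
subset of the Polish space `ℕ → Fin n`. It therefore contains a copy of Cantor space, while it
has at most `n ^ ℵ₀ = 𝔠` elements.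
-/

open Topology Filter Cardinal

variable {n : ℕ}

@[simp] lemma length_initSeg (f : ℕ → Fin n) (k : ℕ) : (initSeg f k).length = k := by
  simp [initSeg]

lemma getElem?_initSeg (f : ℕ → Fin n) (k i : ℕ) :
    (initSeg f k)[i]? = if i < k then some (f i) else none := by
  simp [initSeg, List.getElem?_ofFn]

lemma initSeg_eq_initSeg_iff {f g : ℕ → Fin n} {k : ℕ} :
    initSeg g k = initSeg f k ↔ ∀ i < k, g i = f i := by
  simp [initSeg, List.ofFn_inj, funext_iff, Fin.forall_iff]

lemma initSeg_prefix_initSeg (f : ℕ → Fin n) {j k : ℕ} (h : j ≤ k) :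
    initSeg f j <+: initSeg f k := by
  rw [List.prefix_iff_eq_take]
  refine List.ext_getElem? fun i => ?_
  simp only [length_initSeg, List.getElem?_take, getElem?_initSeg]
  split_ifs <;> first | rfl | omega

lemma initSeg_getD (τ : List (Fin n)) (d : Fin n) :
    initSeg (fun i => τ.getD i d) τ.length = τ := by
  refine List.ext_getElem? fun i => ?_
  rw [getElem?_initSeg]
  split_ifs with h
  · simp [List.getElem?_eq_getElem h]
  · simp [List.getElem?_eq_none (Nat.le_of_not_lt h)]

lemma IsTree.inter {S T : Set (List (Fin n))} (hS : IsTree S) (hT : IsTree T) : IsTree (S ∩ T) :=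
  fun σ hσ τ hτ => ⟨hS σ hσ.1 τ hτ, hT σ hσ.2 τ hτ⟩

lemma isTree_setOf_comparable (σ : List (Fin n)) : IsTree {τ | τ <+: σ ∨ σ <+: τ} := by
  rintro ρ (hρ | hρ) τ hτ
  · exact Or.inl (hτ.trans hρ)
  · exact List.prefix_or_prefix_of_prefix hτ hρ

lemma isTree_setOf_not_prefix (σ : List (Fin n)) : IsTree {τ | ¬σ <+: τ} :=
  fun _ hρ _ hτ hστ => hρ (hστ.trans hτ)

lemma isPath_inter {S T : Set (List (Fin n))} {f : ℕ → Fin n} :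
    IsPath (S ∩ T) f ↔ IsPath S f ∧ IsPath T f :=
  ⟨fun h => ⟨fun k => (h k).1, fun k => (h k).2⟩, fun h k => ⟨h.1 k, h.2 k⟩⟩

lemma isClosed_setOf_initSeg_mem (T : Set (List (Fin n))) (k : ℕ) :
    IsClosed {f : ℕ → Fin n | initSeg f k ∈ T} :=
  (isClosed_discrete {g : Fin k → Fin n | List.ofFn g ∈ T}).preimage (by fun_prop)

lemma isClosed_setOf_isPath (T : Set (List (Fin n))) : IsClosed {f : ℕ → Fin n | IsPath T f} := by
  simpa only [IsPath, Set.ofPred_forall] using isClosed_iInter (isClosed_setOf_initSeg_mem T)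

/-- König's lemma, from the compactness of `ℕ → Fin n`. -/
lemma IsTree.exists_isPath [NeZero n] {T : Set (List (Fin n))} (hT : IsTree T)
    (hlevels : ∀ L, ∃ τ ∈ T, τ.length = L) : ∃ f, IsPath T f := by
  have hdecr : ∀ k, {f : ℕ → Fin n | initSeg f (k + 1) ∈ T} ⊆ {f | initSeg f k ∈ T} :=
    fun k f hf => hT _ hf _ (initSeg_prefix_initSeg f k.le_succ)
  have hne : ∀ k, {f : ℕ → Fin n | initSeg f k ∈ T}.Nonempty := by
    intro k
    obtain ⟨τ, hτT, rfl⟩ := hlevels k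
    exact ⟨fun i => τ.getD i 0, by simpa only [Set.mem_ofPred_eq, initSeg_getD] using hτT⟩
  obtain ⟨f, hf⟩ := IsCompact.nonempty_iInter_of_sequence_nonempty_isCompact_isClosed _ hdecr hne
    (isClosed_setOf_initSeg_mem T 0).isCompact (isClosed_setOf_initSeg_mem T)
  exact ⟨f, Set.mem_iInter.1 hf⟩

lemma accPt_iff_forall_initSeg {C : Set (ℕ → Fin n)} {f : ℕ → Fin n} :
    AccPt f (𝓟 C) ↔ ∀ k, ∃ g ∈ C, initSeg g k = initSeg f k ∧ g ≠ f := by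
  have hcyl : ∀ g k, initSeg g k = initSeg f k ↔ g ∈ PiNat.cylinder f k := fun g k =>
    initSeg_eq_initSeg_iff.trans PiNat.mem_cylinder_iff.symm
  simp only [hcyl]
  rw [accPt_iff_nhds]
  constructor
  · intro h k
    obtain ⟨g, ⟨hgU, hgC⟩, hgf⟩ :=
      h _ ((PiNat.isOpen_cylinder _ f k).mem_nhds (PiNat.self_mem_cylinder f k))
    exact ⟨g, hgC, hgU, hgf⟩
  · intro h U hU
    obtain ⟨_, ⟨x, k, rfl⟩, hfx, hxU⟩ :=
      (PiNat.isTopologicalBasis_cylinders fun _ => Fin n).mem_nhds_iff.1 hU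
    obtain ⟨g, hgC, hgk, hgf⟩ := h k
    rw [PiNat.mem_cylinder_iff_eq] at hfx
    exact ⟨g, ⟨hxU (hfx ▸ hgk), hgC⟩, hgf⟩

lemma Perfect.continuum_le_mk {α : Type*} [TopologicalSpace α]
    [TopologicalSpace.IsCompletelyMetrizableSpace α] {C : Set α} (hC : Perfect C)
    (hne : C.Nonempty) : 𝔠 ≤ #C := by
  let := TopologicalSpace.upgradeIsCompletelyMetrizable α
  obtain ⟨φ, hφC, -, hφ⟩ := hC.exists_nat_bool_injection hne
  simpa using lift_mk_le_lift_mk_of_injective (hφ.codRestrict fun x => hφC ⟨x, rfl⟩)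

lemma primrecRel_isPrefix {α : Type*} [Primcodable α] [DecidableEq α] :
    PrimrecRel (@List.IsPrefix α) :=
  (Primrec.eq.comp Primrec.fst
    (Primrec.list_take.comp (Primrec.list_length.comp Primrec.fst) Primrec.snd)).of_eq
    fun _ => List.prefix_iff_eq_take.symm

protected lemma ComputablePred.comp {α β : Type*} [Primcodable α] [Primcodable β] {p : β → Prop}
    {f : α → β} (hp : ComputablePred p) (hf : Computable f) : ComputablePred fun a => p (f a) := by
  classical
  exact computablePred_iff_computable_decide.2 (hp.decide.comp hf)

protected lemma ComputablePred.and {α : Type*} [Primcodable α] {p q : α → Prop}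
    (hp : ComputablePred p) (hq : ComputablePred q) : ComputablePred fun a => p a ∧ q a := by
  classical
  exact computablePred_iff_computable_decide.2 <|
    (Primrec.and.to_comp.comp hp.decide hq.decide).of_eq fun a => by simp

protected lemma ComputablePred.or {α : Type*} [Primcodable α] {p q : α → Prop}
    (hp : ComputablePred p) (hq : ComputablePred q) : ComputablePred fun a => p a ∨ q a := by
  classical
  exact computablePred_iff_computable_decide.2 <|
    (Primrec.or.to_comp.comp hp.decide hq.decide).of_eq fun a => by simp

lemma Computable.list_all {α β : Type*} [Primcodable α] [Primcodable β] {f : α → List β}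
    {p : α → β → Bool} (hf : Computable f) (hp : Computable₂ p) :
    Computable fun a => (f a).all (p a) := by
  have hrec : ∀ (l : List β) (q : β → Bool) (m : ℕ),
      Nat.rec (motive := fun _ => Bool) true (fun i acc => acc && l[i]?.all q) m =
        (l.take m).all q := by
    intro l q m
    induction m with
    | zero => simp
    | succ m ih => cases h : l[m]? <;> simp [List.take_add_one, ih, h]
  have hstep : Computable₂ fun a (x : ℕ × Bool) => x.2 && (f a)[x.1]?.all (p a) :=
    Primrec.and.to_comp.comp (Computable.snd.comp Computable.snd)
      ((Computable.option_casesOn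
        (Computable.list_getElem?.comp (hf.comp Computable.fst)
          (Computable.fst.comp Computable.snd)) (Computable.const true) (hp.comp (Computable.fst.comp Computable.fst)
          Computable.snd).to₂).of_eq fun x => by cases (f x.1)[x.2.1]? <;> rfl)
  exact (Computable.nat_rec (Computable.list_length.comp hf) (Computable.const true) hstep).of_eq
    fun a => by simp only [hrec, List.take_length]

def words (n : ℕ) : ℕ → List (List (Fin n)) :=
  Nat.rec [[]] fun _ ws => ws.flatMap fun τ => (List.finRange n).map (· :: τ)

lemma mem_words {ρ : List (Fin n)} {L : ℕ} : ρ ∈ words n L ↔ ρ.length = L := by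
  induction L generalizing ρ with
  | zero => simp [words]
  | succ L ih =>
    cases ρ with
    | nil => simp [words]
    | cons a τ => simp [words, ← ih]

lemma primrec_words : Primrec (words n) :=
  Primrec.nat_rec₁ _ (Primrec.list_flatMap Primrec.snd
    (Primrec.list_map (Primrec.const _) (Primrec.list_cons.comp Primrec.snd
      (Primrec.snd.comp Primrec.fst)).to₂).to₂)

lemma ComputablePred.forall_length_eq {α : Type*} [Primcodable α] {p : α → List (Fin n) → Prop}
    (hp : ComputablePred fun x : α × List (Fin n) => p x.1 x.2) :
    ComputablePred fun x : α × ℕ => ∀ ρ : List (Fin n), ρ.length = x.2 → p x.1 ρ := by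
  classical
  exact computablePred_iff_computable_decide.2 <|
    (Computable.list_all (primrec_words.to_comp.comp Computable.snd)
      (hp.decide.comp ((Computable.fst.comp Computable.fst).pair Computable.snd)).to₂).of_eq
      fun x => by simp only [List.all_eq, decide_eq_true_eq, mem_words]

theorem Computable.of_certificate {α β γ : Type*} [Primcodable α] [Primcodable β] [Primcodable γ]
    {f : α → β} (C : α → β → γ → Prop)
    (hC : ComputablePred fun x : (α × β) × γ => C x.1.1 x.1.2 x.2)
    (hsound : ∀ a b c, C a b c → f a = b) (hcomplete : ∀ a, ∃ c, C a (f a) c) :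
    Computable f := by
  classical
  let search : α → ℕ → Option β := fun a e =>
    (Encodable.decode e : Option (β × γ)).bind fun bc => if C a bc.1 bc.2 then some bc.1 else none
  have hcheck : Computable fun x : (α × ℕ) × β × γ =>
      if C x.1.1 x.2.1 x.2.2 then some x.2.1 else none :=
    (Computable.cond (hC.decide.comp (((Computable.fst.comp Computable.fst).pair
        (Computable.fst.comp Computable.snd)).pair (Computable.snd.comp Computable.snd)))
      (Computable.option_some.comp (Computable.fst.comp Computable.snd))
      (Computable.const none)).of_eq fun x => by simp [Bool.cond_decide]
  have hsearch : Computable₂ search :=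
    Computable.option_bind (Computable.decode.comp Computable.snd) hcheck.to₂
  refine Partrec.of_eq_tot (Partrec.rfindOpt hsearch) fun a => ?_
  obtain ⟨c, hc⟩ := hcomplete a
  have hdom : (Nat.rfindOpt (search a)).Dom :=
    Nat.rfindOpt_dom.2 ⟨Encodable.encode (f a, c), f a, by simp [search, hc]⟩
  obtain ⟨e, he⟩ := Nat.rfindOpt_spec (Part.get_mem hdom)
  have hfa : f a = (Nat.rfindOpt (search a)).get hdom := by
    simp only [search, Option.mem_def, Option.bind_eq_some_iff, Option.ite_none_right_eq_some] at he
    obtain ⟨bc, -, hbc, hget⟩ := he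
    exact (hsound a _ _ hbc).trans (Option.some_injective _ hget)
  exact hfa ▸ Part.get_mem hdom

theorem IsTree.exists_length_forall_prefix {T : Set (List (Fin n))} (hT : IsTree T)
    {f : ℕ → Fin n} (huniq : ∀ g, IsPath T g → g = f) (m : ℕ) :
    ∃ L, ∀ ρ ∈ T, ρ.length = L → initSeg f m <+: ρ := by
  have : NeZero n := ⟨(f 0).pos.ne'⟩
  by_contra! h
  obtain ⟨g, hg⟩ := (hT.inter (isTree_setOf_not_prefix (initSeg f m))).exists_isPath fun L =>
    let ⟨ρ, hρT, hρL, hρ⟩ := h L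
    ⟨ρ, ⟨hρT, hρ⟩, hρL⟩
  exact (hg m).2 (huniq g (isPath_inter.1 hg).1 ▸ List.prefix_refl _)

theorem IsTree.computable_of_unique_path {T : Set (List (Fin n))} (hT : IsTree T)
    (hTc : ComputablePred (· ∈ T)) {f : ℕ → Fin n} (hf : IsPath T f)
    (huniq : ∀ g, IsPath T g → g = f) : Computable f := by
  refine Computable.of_certificate
    (fun m a L => ∀ ρ : List (Fin n), ρ.length = L → ρ ∈ T → ρ[m]? = some a)
    ?_ (fun m a L h => ?_) (fun m => ?_)
  · refine ComputablePred.forall_length_eq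
      (p := fun (x : ℕ × Fin n) ρ => ρ ∈ T → ρ[x.1]? = some x.2) ?_
    have hval : PrimrecPred fun x : (ℕ × Fin n) × List (Fin n) => x.2[x.1.1]? = some x.1.2 :=
      Primrec.eq.comp (Primrec.list_getElem?.comp Primrec.snd (Primrec.fst.comp Primrec.fst))
        (Primrec.option_some.comp (Primrec.snd.comp Primrec.fst))
    exact ((hTc.comp Computable.snd).not.or hval.computablePred).of_eq fun x => imp_iff_not_or.symm
  · have := h _ (length_initSeg f L) (hf L)
    rw [getElem?_initSeg] at this
    split_ifs at this
    exact Option.some_injective _ this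
  · obtain ⟨L, hL⟩ := hT.exists_length_forall_prefix huniq (m + 1)
    refine ⟨L, fun ρ hρL hρ => ?_⟩
    rw [List.prefix_iff_getElem?.1 (hL ρ hρ hρL) m (by simp), ← List.getElem?_eq_getElem,
      getElem?_initSeg, if_pos m.lt_succ_self]

theorem IsTree.computable_of_isolated {T : Set (List (Fin n))} (hT : IsTree T)
    (hTc : ComputablePred (· ∈ T)) {f : ℕ → Fin n} (hf : IsPath T f) (k : ℕ)
    (hiso : ∀ g, IsPath T g → initSeg g k = initSeg f k → g = f) : Computable f := by
  have hS : ComputablePred (· ∈ T ∩ {τ | τ <+: initSeg f k ∨ initSeg f k <+: τ}) :=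
    hTc.and ((primrecRel_isPrefix.comp Primrec.id (Primrec.const _)).computablePred.or
      (primrecRel_isPrefix.comp (Primrec.const _) Primrec.id).computablePred)
  refine (hT.inter (isTree_setOf_comparable _)).computable_of_unique_path hS
    (isPath_inter.2 ⟨hf, fun m => (le_total m k).imp (initSeg_prefix_initSeg f)
      (initSeg_prefix_initSeg f)⟩) fun g hg => ?_
  obtain ⟨hgT, hgk⟩ := isPath_inter.1 hg
  refine hiso g hgT ?_
  rcases hgk k with h | h
  · exact h.eq_of_length (by simp)
  · exact (h.eq_of_length (by simp)).symm

/-- A special effectively closed set (a nonempty set of paths of a computable tree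
containing no computable member) has cardinality exactly `2 ^ ℵ₀`. -/
theorem special_class_continuum {n : ℕ} (hn : 2 ≤ n) (T : Set (List (Fin n))) (hT : IsTree T)
    (hTcomp : ComputablePred (· ∈ T))
    (hne : ∃ f : ℕ → Fin n, IsPath T f)
    (hspecial : ∀ f : ℕ → Fin n, IsPath T f → ¬ Computable f) :
    Cardinal.mk {f : ℕ → Fin n | IsPath T f} = 2 ^ Cardinal.aleph0 := by
  have hperfect : Perfect {f : ℕ → Fin n | IsPath T f} := by
    refine ⟨isClosed_setOf_isPath T, fun f hf => accPt_iff_forall_initSeg.2 fun k => ?_⟩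
    by_contra! hiso
    exact hspecial f hf (hT.computable_of_isolated hTcomp hf k hiso)
  rw [two_power_aleph0]
  refine le_antisymm ?_ (hperfect.continuum_le_mk hne)
  calc #{f : ℕ → Fin n | IsPath T f} ≤ #(ℕ → Fin n) := mk_subtype_le _
    _ = 𝔠 := by rw [← power_def, mk_fin, mk_nat, nat_power_aleph0 hn]
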